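/- arXiv:2105.05009 — 7 statements merged into one kernel-verified Lean document; each statement's English description precedes it below -/
import Mathlib

section
/- If a sequence t : ℕ → ℚ satisfies t(0) = 1 and, for all n ≥ 1, ∑_{m=0}^{n} t(m)·t(n−m) = 1, then t(n) = C(2n, n)/4^n for all n. -/
/-!
If `a` and `b` agree below `n ≥ 1`, their self-convolutions at `n` differ by
`(a n - b n) * (a 0 + b 0)`; so in a domain of characteristic not 2, a sequence is determined
by its nonzero initial term and its self-convolution.
For `c m = C(2m, m)` the recursion `(m + 1) c (m + 1) = (4m + 2) c m`, combined with the symmetry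
`i ↦ n - i` of `S n = ∑ c i * c (n - i)`, gives `(n + 1) S (n + 1) = 4 (n + 1) S n`, hence `S n = 4 ^ n`.
-/

open Finset

theorem eq_of_sum_antidiagonal_mul_self_eq {R : Type*} [CommRing R] [NoZeroDivisors R]
    {a b : ℕ → R} (h0 : a 0 = b 0) (hsum0 : a 0 + b 0 ≠ 0)
    (h : ∀ n, 1 ≤ n → ∑ p ∈ antidiagonal n, a p.1 * a p.2 = ∑ p ∈ antidiagonal n, b p.1 * b p.2) :
    ∀ n, a n = b n := by
  intro n
  induction n using Nat.strong_induction_on with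
  | _ n ih =>
    rcases Nat.eq_zero_or_pos n with rfl | hn
    · exact h0
    have hfirst : ∑ p ∈ antidiagonal n, (a p.1 - b p.1) * a p.2 = (a n - b n) * a 0 := by
      refine sum_eq_single (n, 0) (fun p hp hne => ?_) (by simp)
      rw [HasAntidiagonal.mem_antidiagonal] at hp
      rw [ih p.1 (by grind), sub_self, zero_mul]
    have hsecond : ∑ p ∈ antidiagonal n, b p.1 * (a p.2 - b p.2) = b 0 * (a n - b n) := by
      refine sum_eq_single (0, n) (fun p hp hne => ?_) (by simp)
      rw [HasAntidiagonal.mem_antidiagonal] at hp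
      rw [ih p.2 (by grind), sub_self, mul_zero]
    have hdiff : (a n - b n) * (a 0 + b 0) = 0 := by
      calc (a n - b n) * (a 0 + b 0)
          = ∑ p ∈ antidiagonal n, (a p.1 - b p.1) * a p.2
            + ∑ p ∈ antidiagonal n, b p.1 * (a p.2 - b p.2) := by rw [hfirst, hsecond]; ring
        _ = ∑ p ∈ antidiagonal n, a p.1 * a p.2 - ∑ p ∈ antidiagonal n, b p.1 * b p.2 := by
          rw [← sum_add_distrib, ← sum_sub_distrib]; congr 1; ext; ring
        _ = 0 := sub_eq_zero.mpr (h n hn)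
    exact sub_eq_zero.mp ((mul_eq_zero.mp hdiff).resolve_right hsum0)

theorem sum_antidiagonal_mul_self_succ {R : Type*} [CommSemiring R] {c : ℕ → R} {a b : R}
    (hc : ∀ m : ℕ, (m + 1) * c (m + 1) = (a * m + b) * c m) (n : ℕ) :
    (n + 1) * ∑ p ∈ antidiagonal (n + 1), c p.1 * c p.2
      = (a * n + 2 * b) * ∑ p ∈ antidiagonal n, c p.1 * c p.2 := by
  have hsymm : ∀ N : ℕ, 2 * ∑ p ∈ antidiagonal N, (p.1 : R) * c p.1 * c p.2
      = N * ∑ p ∈ antidiagonal N, c p.1 * c p.2 := by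
    intro N
    calc 2 * ∑ p ∈ antidiagonal N, (p.1 : R) * c p.1 * c p.2
        = ∑ p ∈ antidiagonal N, (p.1 : R) * c p.1 * c p.2
          + ∑ p ∈ antidiagonal N, (p.2 : R) * c p.2 * c p.1 := by
          rw [← Nat.sum_antidiagonal_swap]; simp only [Prod.fst_swap, Prod.snd_swap]; ring
      _ = ∑ p ∈ antidiagonal N, ((p.1 + p.2 : ℕ) : R) * (c p.1 * c p.2) := by
          rw [← sum_add_distrib]; push_cast; congr 1; ext; ring
      _ = N * ∑ p ∈ antidiagonal N, c p.1 * c p.2 := by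
          rw [mul_sum]; exact sum_congr rfl fun p hp => by rw [mem_antidiagonal.mp hp]
  have hshift : ∑ p ∈ antidiagonal (n + 1), (p.1 : R) * c p.1 * c p.2
      = a * ∑ p ∈ antidiagonal n, (p.1 : R) * c p.1 * c p.2
        + b * ∑ p ∈ antidiagonal n, c p.1 * c p.2 := by
    rw [Nat.sum_antidiagonal_succ, mul_sum, mul_sum, ← sum_add_distrib]
    simp only [Nat.cast_zero, zero_mul, zero_add, Nat.cast_succ, hc]
    congr 1; ext; ring
  calc (n + 1) * ∑ p ∈ antidiagonal (n + 1), c p.1 * c p.2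
      = 2 * ∑ p ∈ antidiagonal (n + 1), (p.1 : R) * c p.1 * c p.2 := by
        rw [hsymm]; push_cast; rfl
    _ = a * (2 * ∑ p ∈ antidiagonal n, (p.1 : R) * c p.1 * c p.2)
        + 2 * b * ∑ p ∈ antidiagonal n, c p.1 * c p.2 := by rw [hshift]; ring
    _ = (a * n + 2 * b) * ∑ p ∈ antidiagonal n, c p.1 * c p.2 := by rw [hsymm]; ring

theorem Nat.sum_antidiagonal_centralBinom_mul (n : ℕ) :
    ∑ p ∈ antidiagonal n, p.1.centralBinom * p.2.centralBinom = 4 ^ n := by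
  induction n with
  | zero => simp
  | succ n ih =>
    have hrec : ∀ m : ℕ, (m + 1) * (m + 1).centralBinom = (4 * m + 2) * m.centralBinom := by
      intro m; rw [Nat.succ_mul_centralBinom_succ]; ring
    have h := sum_antidiagonal_mul_self_succ hrec n
    rw [ih, Nat.cast_id] at h
    exact Nat.eq_of_mul_eq_mul_left (by positivity : 0 < n + 1) (h.trans (by ring))

theorem sum_antidiagonal_centralBinom_div_four_pow {K : Type*} [Field K] [CharZero K] (n : ℕ) :
    ∑ p ∈ antidiagonal n, (p.1.centralBinom : K) / 4 ^ p.1 * (p.2.centralBinom / 4 ^ p.2) = 1 := by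
  calc ∑ p ∈ antidiagonal n, (p.1.centralBinom : K) / 4 ^ p.1 * (p.2.centralBinom / 4 ^ p.2)
      = (∑ p ∈ antidiagonal n, p.1.centralBinom * p.2.centralBinom : ℕ) / 4 ^ n := by
        rw [Nat.cast_sum, sum_div]
        refine sum_congr rfl fun p hp => ?_
        rw [← mem_antidiagonal.mp hp, pow_add]; push_cast; ring
    _ = 1 := by
        rw [Nat.sum_antidiagonal_centralBinom_mul]; push_cast; exact div_self (by simp)

/-- A sequence with t(0)=1 whose self-convolution is identically 1 must be C(2n,n)/4^n. -/
theorem convolution_unique (t : ℕ → ℚ) (h0 : t 0 = 1)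
    (hconv : ∀ n : ℕ, 1 ≤ n → (∑ m ∈ Finset.range (n + 1), t m * t (n - m)) = 1) :
    ∀ n : ℕ, t n = (Nat.choose (2 * n) n : ℚ) / 4 ^ n := by
  refine eq_of_sum_antidiagonal_mul_self_eq (b := fun n => (n.centralBinom : ℚ) / 4 ^ n)
    (by simp [h0]) (by norm_num [h0]) fun n hn => ?_
  rw [Nat.sum_antidiagonal_eq_sum_range_succ (fun i j => t i * t j), Nat.succ_eq_add_one,
    hconv n hn, sum_antidiagonal_centralBinom_div_four_pow]
end

section
/- The sequence t(n) = C(2n,n)/4^n satisfies the recurrence t(n) = (1/2)·∑_{m=0}^{n-1} t(m)·t(n−1−m) − (1/2)·∑_{m=1}^{n-1} t(m)·t(n−m) for all n ≥ 1. -/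
/-!
Up to the signs `(-1)^n`, `t n` is the binomial coefficient `choose (-1/2) n`, i.e. the `n`-th
coefficient of `(1 - x)^(-1/2)`. Chu–Vandermonde for `-1/2 + -1/2 = -1` says that the square of
this series is `(1 - x)⁻¹`, so every convolution `∑_{m ≤ n} t m * t (n - m)` equals `1`. Both sums
in the recurrence are such convolutions: the first is the full one for `n - 1`, the second the one
for `n` without its two end terms `t 0 * t n = t n`. Hence the right-hand side is
`1/2 - (1 - 2 t n)/2 = t n`.
-/

/-- t(n) = C(2n,n)/4^n -/
noncomputable def t (n : ℕ) : ℚ := (Nat.choose (2 * n) n : ℚ) / 4 ^ n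

open Finset

theorem Ring.succ_nsmul_choose_succ {R : Type*} [NonAssocRing R] [Pow R ℕ] [BinomialRing R]
    [NatPowAssoc R] (r : R) (n : ℕ) :
    (n + 1) • Ring.choose r (n + 1) = Ring.choose r n * (r - n) := by
  simpa [Nat.choose_succ_self_right, Ring.choose_one_right] using
    Ring.choose_smul_choose r n.le_succ

theorem Ring.choose_neg_one {R : Type*} [Ring R] [BinomialRing R] (n : ℕ) :
    Ring.choose (-1 : R) n = (-1) ^ n := by
  simp [Ring.choose_neg, Ring.choose_natCast, Int.negOnePow, Units.smul_def]

theorem Ring.choose_neg_half {K : Type*} [Field K] [CharZero K] (n : ℕ) :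
    Ring.choose (-2⁻¹ : K) n = (-4⁻¹) ^ n * n.centralBinom := by
  induction n with
  | zero => simp
  | succ n ih =>
    have hrec := Ring.succ_nsmul_choose_succ (-2⁻¹ : K) n
    have hcb : ((n : K) + 1) * (n + 1).centralBinom = 2 * (2 * n + 1) * n.centralBinom := by
      exact_mod_cast Nat.succ_mul_centralBinom_succ n
    rw [nsmul_eq_mul, ih] at hrec
    apply mul_left_cancel₀ n.cast_add_one_ne_zero
    push_cast at hrec ⊢
    rw [hrec, pow_succ]
    linear_combination (4⁻¹ * (-4⁻¹) ^ n : K) * hcb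

theorem Nat.sum_antidiagonal_centralBinom_mul_centralBinom (n : ℕ) :
    ∑ ij ∈ antidiagonal n, ij.1.centralBinom * ij.2.centralBinom = 4 ^ n := by
  have hvdm := Ring.add_choose_eq n (Commute.refl (-2⁻¹ : ℚ))
  rw [show (-2⁻¹ + -2⁻¹ : ℚ) = -1 by norm_num, Ring.choose_neg_one] at hvdm
  have hfactor : ∑ ij ∈ antidiagonal n, Ring.choose (-2⁻¹ : ℚ) ij.1 * Ring.choose (-2⁻¹) ij.2 =
      (-4⁻¹) ^ n * ∑ ij ∈ antidiagonal n, (ij.1.centralBinom * ij.2.centralBinom : ℚ) := by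
    rw [mul_sum]
    refine sum_congr rfl fun ij hij => ?_
    rw [Ring.choose_neg_half, Ring.choose_neg_half, ← mem_antidiagonal.mp hij, pow_add]
    ring
  qify
  apply mul_left_cancel₀ (pow_ne_zero n (by norm_num : (-4⁻¹ : ℚ) ≠ 0))
  rw [← hfactor, ← hvdm, ← mul_pow]
  norm_num

theorem sum_range_t_mul_t (n : ℕ) : ∑ m ∈ range (n + 1), t m * t (n - m) = 1 := by
  have hcb := Nat.sum_antidiagonal_centralBinom_mul_centralBinom n
  rw [← Nat.sum_antidiagonal_eq_sum_range_succ (fun i j => t i * t j)]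
  calc ∑ ij ∈ antidiagonal n, t ij.1 * t ij.2
      = ∑ ij ∈ antidiagonal n, (ij.1.centralBinom * ij.2.centralBinom : ℚ) / 4 ^ n := by
        refine sum_congr rfl fun ij hij => ?_
        rw [t, t, ← Nat.centralBinom_eq_two_mul_choose, ← Nat.centralBinom_eq_two_mul_choose,
          ← mem_antidiagonal.mp hij, pow_add]
        ring
    _ = 1 := by
        rw [← sum_div, div_eq_one_iff_eq (by positivity)]
        exact_mod_cast hcb

/-- Recurrence t(n) = ½∑_{m=0}^{n-1} t(m)t(n-1-m) − ½∑_{m=1}^{n-1} t(m)t(n-m). -/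
theorem t_recurrence (n : ℕ) (hn : 1 ≤ n) :
    t n = (1 / 2) * (∑ m ∈ Finset.range n, t m * t (n - 1 - m))
        - (1 / 2) * (∑ m ∈ Finset.Ico 1 n, t m * t (n - m)) := by
  obtain ⟨k, rfl⟩ : ∃ k, n = k + 1 := ⟨n - 1, by omega⟩
  have ht0 : t 0 = 1 := by simp [t]
  have hconv := sum_range_t_mul_t (k + 1)
  rw [range_eq_Ico, sum_Ico_succ_top (by omega), sum_eq_sum_Ico_succ_bot (by omega)] at hconv
  simp only [Nat.add_sub_cancel, Nat.sub_zero, Nat.sub_self, ht0] at hconv ⊢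
  rw [sum_range_t_mul_t k]
  linarith
end

section
/- t(n)·√(π n) tends to 1 as n → ∞, where t(n) = C(2n,n)/4^n. -/
/-!
Write `C(2n,n) = (2n)! / (n!)²` and express each factorial through Stirling's sequence
`s n = n! / (√(2n) (n/e)^n)`: the powers of `n/e` cancel and the quantity becomes exactly
`s (2n) / (s n)² · √π`, which tends to `√π / π · √π = 1` by Stirling's formula `s n → √π`.
-/

open Filter Real Stirling Topology

theorem choose_two_mul_div_four_pow_mul_sqrt_pi_mul_eq {n : ℕ} (hn : n ≠ 0) :
    ((2 * n).choose n : ℝ) / 4 ^ n * √(π * n) = stirlingSeq (2 * n) / stirlingSeq n ^ 2 * √π := by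
  have hsqrt : √(2 * (2 * n : ℝ)) = 2 * √n := by
    rw [show (2 : ℝ) * (2 * n) = 2 ^ 2 * n by ring, sqrt_mul (by positivity), sqrt_sq zero_le_two]
  have hpow : (2 * n / exp 1 : ℝ) ^ (2 * n) = 4 ^ n * ((n / exp 1) ^ n) ^ 2 := by
    rw [mul_div_assoc, mul_pow, pow_mul, pow_mul']
    norm_num
  rw [Nat.cast_choose ℝ (by omega : n ≤ 2 * n), show 2 * n - n = n by omega, stirlingSeq,
    stirlingSeq, Nat.cast_mul, Nat.cast_ofNat, hsqrt, hpow, sqrt_mul pi_nonneg]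
  field_simp
  rw [sq_sqrt (by positivity), sq_sqrt (by positivity)]
  ring

open Filter in
/-- t(n)·√(πn) → 1 as n → ∞, where t(n) = C(2n,n)/4^n. -/
theorem t_asymptotic :
    Tendsto (fun n : ℕ => (Nat.choose (2 * n) n : ℝ) / 4 ^ n * Real.sqrt (Real.pi * n))
      atTop (nhds 1) := by
  have hstirling_two_mul : Tendsto (fun n : ℕ => stirlingSeq (2 * n)) atTop (𝓝 √π) :=
    tendsto_stirlingSeq_sqrt_pi.comp (tendsto_id.const_mul_atTop' two_pos)
  have hlim := (hstirling_two_mul.div (tendsto_stirlingSeq_sqrt_pi.pow 2)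
    (by positivity)).mul_const √π
  rw [show √π / √π ^ 2 * √π = 1 by field_simp] at hlim
  refine hlim.congr' ?_
  filter_upwards [eventually_ne_atTop 0] with n hn
  exact (choose_two_mul_div_four_pow_mul_sqrt_pi_mul_eq hn).symm
end

section
/- The number of distinct strings of positive integers z with T(z) − L(z) + L(z) ≤ n that can occur as the initial segment (before the first zero) of a convex Bloch sequence of order n equals 2^n − n. -/
/-! Let `z` be the initial string of a convex Bloch sequence `K` of order `n`, of sum `s`.
Then `s ≤ n`, and if `s < n` then `K = z ++ 0 :: t` with `t ≠ []`, so the partial-sum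
condition at position `L(z) + 1` gives `L(z) < s`. Conversely every list `z` of positive
integers with `s ≤ n` and `L(z) < s` unless `s = n` occurs: pad `z` with zeros if `s = n`, and
otherwise follow it by `0, n - s, 0, …, 0`. So the initial strings are the compositions of
`0, 1, …, n`, of which there are `1 + ∑_{1 ≤ s ≤ n} 2^(s-1) = 2^n`, except the `n` strings
`1^k` with `k < n`. -/

/-- A convex Bloch sequence of order n, as a list: length n, sum n, and
every partial sum of the first p entries (1 ≤ p ≤ n-1) is at least p. -/
def IsConvexBloch (n : ℕ) (K : List ℕ) : Prop :=
  K.length = n ∧ K.sum = n ∧ ∀ p : ℕ, 1 ≤ p → p ≤ n - 1 → p ≤ (K.take p).sum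

namespace List

theorem le_sum_take_of_forall_pos {l : List ℕ} (hl : ∀ x ∈ l, 0 < x) {p : ℕ}
    (hp : p ≤ l.length) : p ≤ (l.take p).sum := by
  simpa [hp] using (l.take p).length_le_sum_of_one_le fun x hx => hl x (mem_of_mem_take hx)

theorem sum_take_append_of_length_le {M : Type*} [AddMonoid M] {l w : List M} {p : ℕ}
    (hp : l.length ≤ p) : ((l ++ w).take p).sum = l.sum + (w.take (p - l.length)).sum := by
  rw [take_append, take_of_length_le hp, sum_append]

theorem le_sum_take_append {z w : List ℕ} (hz : ∀ x ∈ z, 0 < x) {p : ℕ}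
    (hw : z.length ≤ p → p ≤ z.sum + (w.take (p - z.length)).sum) :
    p ≤ ((z ++ w).take p).sum := by
  rcases le_total p z.length with hp | hp
  · rw [take_append_of_le_length hp]
    exact le_sum_take_of_forall_pos hz hp
  · rw [sum_take_append_of_length_le hp]
    exact hw hp

theorem eq_replicate_one_of_sum_le_length {l : List ℕ} (hl : ∀ x ∈ l, 0 < x)
    (h : l.sum ≤ l.length) : l = replicate l.length 1 := by
  induction l with
  | nil => rfl
  | cons a t ih =>
    have ht_pos : ∀ x ∈ t, 0 < x := fun x hx => hl x (mem_cons_of_mem a hx)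
    have ht := t.length_le_sum_of_one_le ht_pos
    have ha := hl a mem_cons_self
    simp only [sum_cons, length_cons] at h
    rw [length_cons, replicate_succ, show a = 1 by omega, ← ih ht_pos (by omega)]

end List

section InitialString

open List

def initialString (K : List ℕ) : List ℕ :=
  K.takeWhile (fun x => x ≠ 0)

theorem forall_pos_initialString (K : List ℕ) : ∀ x ∈ initialString K, 0 < x := by
  intro x hx
  simpa [Nat.pos_iff_ne_zero] using mem_takeWhile_imp hx

theorem eq_initialString_or_eq_initialString_append_zero_cons (K : List ℕ) :
    K = initialString K ∨ ∃ t, K = initialString K ++ 0 :: t := by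
  have hK : initialString K ++ K.dropWhile (fun x => x ≠ 0) = K := takeWhile_append_dropWhile
  rcases hd : K.dropWhile (fun x => x ≠ 0) with _ | ⟨a, t⟩
  · left
    rw [hd, append_nil] at hK
    exact hK.symm
  · right
    have ha := head_dropWhile_not (fun x => decide (x ≠ 0)) (l := K)
      (by rw [hd]; exact cons_ne_nil a t)
    simp only [hd, head_cons, decide_eq_false_iff_not, not_not] at ha
    exact ⟨t, by rw [← ha, ← hd, hK]⟩

theorem initialString_append_of_forall_pos {z : List ℕ} (hz : ∀ x ∈ z, 0 < x) (w : List ℕ) :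
    initialString (z ++ w) = z ++ initialString w :=
  takeWhile_append_of_pos fun x hx => by simpa using (hz x hx).ne'

namespace IsConvexBloch

variable {n : ℕ} {K : List ℕ}

theorem sum_initialString_le (hK : IsConvexBloch n K) : (initialString K).sum ≤ n := by
  rcases eq_initialString_or_eq_initialString_append_zero_cons K with h | ⟨t, h⟩
  · rw [← h, hK.2.1]
  · have := hK.2.1
    rw [h, sum_append] at this
    omega

theorem length_initialString_lt_sum (hK : IsConvexBloch n K) (hs : (initialString K).sum < n) :
    (initialString K).length < (initialString K).sum := by
  obtain ⟨hlen, hsum, hpart⟩ := hK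
  rcases eq_initialString_or_eq_initialString_append_zero_cons K with h | ⟨t, h⟩
  · rw [← h] at hs
    omega
  · generalize initialString K = z at hs h ⊢
    subst h
    simp only [length_append, length_cons, sum_append, sum_cons, zero_add] at hlen hsum
    have ht : t ≠ [] := by
      rintro rfl
      simp only [sum_nil] at hsum
      omega
    have := hpart (z.length + 1) (by omega) (by have := length_pos_iff.2 ht; omega)
    simpa [sum_take_append_of_length_le] using this

end IsConvexBloch

section

variable {n : ℕ} {z : List ℕ}

theorem isConvexBloch_append_replicate_zero (hz : ∀ x ∈ z, 0 < x) (hs : z.sum = n) :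
    IsConvexBloch n (z ++ replicate (n - z.length) 0) := by
  have := z.length_le_sum_of_one_le hz
  refine ⟨by simp only [length_append, length_replicate]; omega, by simp [hs],
    fun p _ hp => le_sum_take_append hz fun _ => by omega⟩

theorem isConvexBloch_append_zero_cons (hz : ∀ x ∈ z, 0 < x) (hlt : z.length < z.sum)
    (hs : z.sum < n) :
    IsConvexBloch n (z ++ 0 :: (n - z.sum) :: replicate (n - z.length - 2) 0) := by
  refine ⟨by simp only [length_append, length_cons, length_replicate]; omega,
    by simp only [sum_append, sum_cons, sum_replicate, smul_zero]; omega,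
    fun p _ hp => le_sum_take_append hz fun _ => ?_⟩
  match h : p - z.length with
  | 0 | 1 => simp only [take_succ_cons, take_zero, sum_cons, sum_nil, add_zero]; omega
  | q + 2 =>
    simp only [take_succ_cons, take_replicate, sum_cons, sum_replicate, smul_zero, add_zero]
    omega

end

theorem exists_isConvexBloch_initialString_eq_iff {n : ℕ} {z : List ℕ} :
    (∃ K, IsConvexBloch n K ∧ z = initialString K) ↔
      (∀ x ∈ z, 0 < x) ∧ z.sum ≤ n ∧ (z.sum < n → z.length < z.sum) := by
  constructor
  · rintro ⟨K, hK, rfl⟩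
    exact ⟨forall_pos_initialString K, hK.sum_initialString_le, hK.length_initialString_lt_sum⟩
  · rintro ⟨hz, hle, hlt⟩
    rcases hle.eq_or_lt with hs | hs
    · refine ⟨_, isConvexBloch_append_replicate_zero hz hs, ?_⟩
      rw [initialString_append_of_forall_pos hz]
      simp [initialString]
    · refine ⟨_, isConvexBloch_append_zero_cons hz (hlt hs) hs, ?_⟩
      rw [initialString_append_of_forall_pos hz]
      simp [initialString]

end InitialString

open Finset

-- The term `2 ^ (0 - 1) = 1` counts the empty composition, as in `composition_card 0`.
theorem sum_range_succ_two_pow_pred (n : ℕ) : ∑ s ∈ range (n + 1), 2 ^ (s - 1) = 2 ^ n := by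
  induction n with
  | zero => rfl
  | succ n ih => rw [sum_range_succ, ih, Nat.add_sub_cancel, ← two_mul, pow_succ']

def positiveListsSumLE (n : ℕ) : Finset (List ℕ) :=
  (range (n + 1)).biUnion fun s => univ.image fun c : Composition s => c.blocks

theorem mem_positiveListsSumLE {n : ℕ} {l : List ℕ} :
    l ∈ positiveListsSumLE n ↔ (∀ x ∈ l, 0 < x) ∧ l.sum ≤ n := by
  simp only [positiveListsSumLE, mem_biUnion, mem_range, mem_image, mem_univ, true_and]
  constructor
  · rintro ⟨s, hs, c, rfl⟩
    exact ⟨fun _ => c.blocks_pos, by rw [c.blocks_sum]; omega⟩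
  · rintro ⟨hl, hle⟩
    exact ⟨l.sum, by omega, ⟨l, fun hx => hl _ hx, rfl⟩, rfl⟩

theorem card_positiveListsSumLE (n : ℕ) : #(positiveListsSumLE n) = 2 ^ n := by
  classical
  have hdisj : (range (n + 1) : Set ℕ).PairwiseDisjoint
      fun s => univ.image fun c : Composition s => c.blocks := by
    intro s _ s' _ hss'
    simp only [Function.onFun, disjoint_left, mem_image, mem_univ, true_and]
    rintro _ ⟨c, rfl⟩ ⟨c', hc'⟩
    exact hss' (c.blocks_sum ▸ hc' ▸ c'.blocks_sum)
  rw [positiveListsSumLE, card_biUnion hdisj, ← sum_range_succ_two_pow_pred]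
  refine sum_congr rfl fun s _ => ?_
  rw [card_image_of_injective _ fun _ _ => Composition.ext, card_univ, composition_card]

theorem initialStrings_eq (n : ℕ) :
    {z : List ℕ | ∃ K, IsConvexBloch n K ∧ z = initialString K} =
      ↑(positiveListsSumLE n \ (range n).image fun k => List.replicate k 1) := by
  ext z
  simp only [Set.mem_ofPred_eq, exists_isConvexBloch_initialString_eq_iff, coe_sdiff,
    Set.mem_sdiff, mem_coe, mem_positiveListsSumLE, mem_image, mem_range, and_assoc]
  refine and_congr_right fun hz => and_congr_right fun hle => ?_
  have := z.length_le_sum_of_one_le hz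
  constructor
  · rintro hlt ⟨k, hk, rfl⟩
    simp only [List.sum_replicate, smul_eq_mul, mul_one, List.length_replicate, lt_irrefl] at hlt
    exact hlt hk
  · intro hnot hs
    by_contra! hge
    exact hnot ⟨z.length, by omega, (z.eq_replicate_one_of_sum_le_length hz hge).symm⟩

theorem image_replicate_one_subset_positiveListsSumLE (n : ℕ) :
    (range n).image (fun k => List.replicate k 1) ⊆ positiveListsSumLE n := by
  simp only [subset_iff, mem_image, mem_range, mem_positiveListsSumLE]
  rintro _ ⟨k, hk, rfl⟩
  simpa using hk.le

theorem card_initial_strings_general (n : ℕ) :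
    {z : List ℕ | ∃ K : List ℕ, IsConvexBloch n K ∧
        z = K.takeWhile (fun x => x ≠ 0)}.ncard = 2 ^ n - n := by
  have hones_card : #((range n).image fun k => List.replicate k 1) = n :=
    (card_image_of_injective _ fun _ _ h => by simpa using congrArg List.length h).trans
      (card_range n)
  change {z : List ℕ | ∃ K, IsConvexBloch n K ∧ z = initialString K}.ncard = _
  rw [initialStrings_eq, Set.ncard_coe_finset,
    card_sdiff_of_subset (image_replicate_one_subset_positiveListsSumLE n),
    card_positiveListsSumLE, hones_card]

/-- The number of distinct initial strings of positive integers (the maximal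
prefix before the first zero) occurring among convex Bloch sequences of order n
equals 2^n - n. -/
theorem card_initial_strings (n : ℕ) (hn : 1 ≤ n) :
    {z : List ℕ | ∃ K : List ℕ, IsConvexBloch n K ∧
        z = K.takeWhile (fun x => x ≠ 0)}.ncard = 2 ^ n - n :=
  card_initial_strings_general n
end

section
/- For Bloch sequences with crossing numbers N_1, n_1, …, N_m, n_m (where N_1, n_m ≥ 0 and all other N_i, n_i ≥ 1), the minimal possible order n of such a sequence satisfies m ≤ n/3 + 1. -/
/-- Partial sum K_p = k_1 + ⋯ + k_p of a Bloch sequence given as a list. -/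
def psum (l : List ℕ) (p : ℕ) : ℕ := (l.take p).sum

/-- The staircase path crosses above the upper diagonal at step i. -/
def UpCross (l : List ℕ) (i : ℕ) : Prop :=
  1 ≤ i ∧ i ≤ l.length ∧ i < psum l i ∧ psum l (i - 1) ≤ i - 1

/-- The staircase path crosses below the main diagonal at step i. -/
def DownCross (l : List ℕ) (i : ℕ) : Prop :=
  1 ≤ i ∧ i ≤ l.length ∧ psum l i < i ∧ i - 1 ≤ psum l (i - 1)


/-!
An up-crossing at step `u` gives `K_u ≥ u + 1` and a later down-crossing at step `d` gives
`K_d ≤ d - 1`; since the partial sums are monotone, `d ≥ u + 2`. Each intermediate block thus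
advances the step index by at least three, while the last up-crossing `u_m` satisfies
`u_m < K_{u_m} ≤ n`, whence `3 (m - 1) ≤ n`.
-/

lemma psum_mono (l : List ℕ) : Monotone (psum l) := by
  intro a b hab
  obtain ⟨c, rfl⟩ := Nat.exists_eq_add_of_le hab
  simp only [psum, List.take_add, List.sum_append, Nat.le_add_right]

lemma psum_le_sum (l : List ℕ) (p : ℕ) : psum l p ≤ l.sum :=
  (List.take_sublist p l).sum_le_sum fun _ _ => Nat.zero_le _

lemma UpCross.lt_sum {l : List ℕ} {u : ℕ} (hu : UpCross l u) : u < l.sum :=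
  hu.2.2.1.trans_le (psum_le_sum l u)

lemma UpCross.add_two_le {l : List ℕ} {u d : ℕ} (hu : UpCross l u) (hd : DownCross l d)
    (hud : u ≤ d) : u + 2 ≤ d := by
  have := psum_mono l hud
  have := hu.2.2.1
  have := hd.2.2.1
  omega

section Interleaved

variable {l : List ℕ} {m : ℕ} {d u : ℕ → ℕ}

lemma three_mul_le_downCross_add_two
    (hd : ∀ i : ℕ, 1 ≤ i → i ≤ m - 1 → DownCross l (d i))
    (hu : ∀ i : ℕ, 2 ≤ i → i ≤ m → UpCross l (u i))
    (hdu : ∀ i : ℕ, 1 ≤ i → i ≤ m - 1 → d i < u (i + 1))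
    (hud : ∀ i : ℕ, 2 ≤ i → i ≤ m - 1 → u i < d i)
    {i : ℕ} (hi : 1 ≤ i) (him : i ≤ m - 1) : 3 * i ≤ d i + 2 := by
  induction i, hi using Nat.le_induction with
  | base => have := (hd 1 le_rfl him).1; omega
  | succ j hj ih =>
    have hgap := (hu (j + 1) (by omega) (by omega)).add_two_le (hd (j + 1) (by omega) him)
      (hud (j + 1) (by omega) him).le
    have := hdu j hj (by omega)
    have := ih (by omega)
    omega

lemma three_mul_pred_le_sum
    (hd : ∀ i : ℕ, 1 ≤ i → i ≤ m - 1 → DownCross l (d i))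
    (hu : ∀ i : ℕ, 2 ≤ i → i ≤ m → UpCross l (u i))
    (hdu : ∀ i : ℕ, 1 ≤ i → i ≤ m - 1 → d i < u (i + 1))
    (hud : ∀ i : ℕ, 2 ≤ i → i ≤ m - 1 → u i < d i) :
    3 * (m - 1) ≤ l.sum := by
  rcases Nat.lt_or_ge m 2 with hm | hm
  · omega
  have hlast := (hu m hm le_rfl).lt_sum
  have hprev := three_mul_le_downCross_add_two hd hu hdu hud (i := m - 1) (by omega) le_rfl
  have hstep := hdu (m - 1) (by omega) le_rfl
  rw [Nat.sub_add_cancel (by omega)] at hstep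
  omega

end Interleaved

theorem crossing_blocks_bound_general (n m : ℕ) (l : List ℕ)
    (hsum : l.sum = n)
    (d u : ℕ → ℕ)
    (hd : ∀ i : ℕ, 1 ≤ i → i ≤ m - 1 → DownCross l (d i))
    (hu : ∀ i : ℕ, 2 ≤ i → i ≤ m → UpCross l (u i))
    (hdu : ∀ i : ℕ, 1 ≤ i → i ≤ m - 1 → d i < u (i + 1))
    (hud : ∀ i : ℕ, 2 ≤ i → i ≤ m - 1 → u i < d i) :
    (m : ℚ) ≤ (n : ℚ) / 3 + 1 := by
  have key := three_mul_pred_le_sum hd hu hdu hud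
  have : 3 * (m : ℚ) ≤ n + 3 := by exact_mod_cast (by omega : 3 * m ≤ n + 3)
  linarith

/-- If a Bloch sequence of order n has crossing numbers N_1,n_1,…,N_m,n_m
(so each of the m-1 intermediate blocks contains a down-crossing followed by an
up-crossing of the next block, interleaved in order), then m ≤ n/3 + 1. -/
theorem crossing_blocks_bound (n m : ℕ) (hm : 1 ≤ m) (l : List ℕ)
    (hlen : l.length = n) (hsum : l.sum = n)
    (d u : ℕ → ℕ)
    (hd : ∀ i : ℕ, 1 ≤ i → i ≤ m - 1 → DownCross l (d i))
    (hu : ∀ i : ℕ, 2 ≤ i → i ≤ m → UpCross l (u i))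
    (hdu : ∀ i : ℕ, 1 ≤ i → i ≤ m - 1 → d i < u (i + 1))
    (hud : ∀ i : ℕ, 2 ≤ i → i ≤ m - 1 → u i < d i) :
    (m : ℚ) ≤ (n : ℚ) / 3 + 1 :=
  crossing_blocks_bound_general n m l hsum d u hd hu hdu hud
end

section
/- For t(n) = C(2n,n)/4^n and any integers a ≥ 1: ∑_{k=0}^{a−1} t(k)·t(a−1−k) = 1, and consequently ∑_{k=1}^{a} t(k)·t(a−k) = 1 − t(a), since the k = 0 term contributes t(0)t(a) = t(a). -/
open Finset

section Convolution

variable {R : Type*} [CommSemiring R] (u : ℕ → R)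

theorem two_mul_sum_antidiagonal_fst_mul (m : ℕ) :
    2 * ∑ p ∈ antidiagonal m, (p.1 : R) * (u p.1 * u p.2) =
      m * ∑ p ∈ antidiagonal m, u p.1 * u p.2 := by
  have sum_swap : ∑ p ∈ antidiagonal m, (p.1 : R) * (u p.1 * u p.2) =
      ∑ p ∈ antidiagonal m, (p.2 : R) * (u p.1 * u p.2) := by
    rw [← Nat.sum_antidiagonal_swap]
    exact sum_congr rfl fun p _ => by simp only [Prod.fst_swap, Prod.snd_swap]; ring
  calc 2 * ∑ p ∈ antidiagonal m, (p.1 : R) * (u p.1 * u p.2)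
      = ∑ p ∈ antidiagonal m, ((p.1 + p.2 : ℕ) : R) * (u p.1 * u p.2) := by
        rw [two_mul]
        nth_rw 2 [sum_swap]
        rw [← sum_add_distrib]
        push_cast
        simp only [add_mul]
    _ = m * ∑ p ∈ antidiagonal m, u p.1 * u p.2 := by
        rw [mul_sum]
        exact sum_congr rfl fun p hp => by rw [mem_antidiagonal.mp hp]

end Convolution

section Recurrence

variable {K : Type*} [Field K] [CharZero K] {u : ℕ → K}

theorem sum_antidiagonal_succ_eq_of_recurrence
    (hu : ∀ k : ℕ, 2 * ((k : K) + 1) * u (k + 1) = (2 * k + 1) * u k) (m : ℕ) :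
    ∑ p ∈ antidiagonal (m + 1), u p.1 * u p.2 = ∑ p ∈ antidiagonal m, u p.1 * u p.2 := by
  have key : ((m : K) + 1) * ∑ p ∈ antidiagonal (m + 1), u p.1 * u p.2 =
      ((m : K) + 1) * ∑ p ∈ antidiagonal m, u p.1 * u p.2 := by
    calc ((m : K) + 1) * ∑ p ∈ antidiagonal (m + 1), u p.1 * u p.2
        = 2 * ∑ p ∈ antidiagonal (m + 1), (p.1 : K) * (u p.1 * u p.2) := by
          rw [two_mul_sum_antidiagonal_fst_mul]; push_cast; rfl
      _ = ∑ p ∈ antidiagonal m, 2 * ((p.1 : K) + 1) * u (p.1 + 1) * u p.2 := by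
          simp only [Nat.sum_antidiagonal_succ, Nat.cast_zero, zero_mul, zero_add, mul_sum,
            Nat.cast_add, Nat.cast_one]
          exact sum_congr rfl fun _ _ => by ring
      _ = ∑ p ∈ antidiagonal m, (2 * ((p.1 : K) * (u p.1 * u p.2)) + u p.1 * u p.2) :=
          sum_congr rfl fun p _ => by rw [hu]; ring
      _ = ((m : K) + 1) * ∑ p ∈ antidiagonal m, u p.1 * u p.2 := by
          rw [sum_add_distrib, ← mul_sum, two_mul_sum_antidiagonal_fst_mul]
          ring
  exact mul_left_cancel₀ (Nat.cast_add_one_ne_zero m) key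

theorem sum_antidiagonal_mul_eq_sq_of_recurrence
    (hu : ∀ k : ℕ, 2 * ((k : K) + 1) * u (k + 1) = (2 * k + 1) * u k) (m : ℕ) :
    ∑ p ∈ antidiagonal m, u p.1 * u p.2 = u 0 ^ 2 := by
  induction m with
  | zero => simp [sq]
  | succ m ih => rw [sum_antidiagonal_succ_eq_of_recurrence hu, ih]

end Recurrence

theorem t_zero : t 0 = 1 := by simp [t]

theorem two_mul_succ_mul_t_succ (k : ℕ) : 2 * ((k : ℚ) + 1) * t (k + 1) = (2 * k + 1) * t k := by
  have h : ((k + 1 : ℕ) : ℚ) * Nat.centralBinom (k + 1) = 2 * (2 * k + 1) * Nat.centralBinom k := by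
    exact_mod_cast Nat.succ_mul_centralBinom_succ k
  simp only [t, ← Nat.centralBinom_eq_two_mul_choose, pow_succ]
  push_cast at h
  field_simp
  linear_combination 2 * h

theorem sum_antidiagonal_t_mul_t (m : ℕ) : ∑ p ∈ antidiagonal m, t p.1 * t p.2 = 1 := by
  rw [sum_antidiagonal_mul_eq_sq_of_recurrence two_mul_succ_mul_t_succ, t_zero, one_pow]

/-- For a ≥ 1: ∑_{k=0}^{a-1} t(k)t(a-1-k) = 1 and ∑_{k=1}^{a} t(k)t(a-k) = 1 − t(a). -/
theorem conv_shift (a : ℕ) (ha : 1 ≤ a) :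
    (∑ k ∈ Finset.range a, t k * t (a - 1 - k)) = 1 ∧
    (∑ k ∈ Finset.Icc 1 a, t k * t (a - k)) = 1 - t a := by
  obtain ⟨n, rfl⟩ : ∃ n, a = n + 1 := ⟨a - 1, by omega⟩
  have hS := sum_antidiagonal_t_mul_t
  simp only [Nat.sum_antidiagonal_eq_sum_range_succ (fun i j => t i * t j)] at hS
  refine ⟨by simpa using hS n, ?_⟩
  have h := hS (n + 1)
  rw [sum_range_eq_add_Ico _ (Nat.succ_pos _), Nat.succ_eq_add_one, Ico_add_one_right_eq_Icc] at h
  rw [← h, t_zero, one_mul, Nat.sub_zero]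
  ring
end

section
/- For every n ≥ 1, 2^n − n ≤ Catalan number C_n, i.e. the Salzman lower bound on distinct operator groups within convex diagrams does not exceed the total number of convex diagrams. -/
/-! Induction on `n`, using the ratio `C (n + 1) / C n = 2 (2n + 1) / (n + 2)`: it is at least `2`,
and the surplus over doubling pays for the `n + 1` lost in `2 ^ (n + 1) - (n + 1)` as soon as
`3n + 2 ≤ 2 ^ (n + 1)`, i.e. for `n ≥ 2`. -/

theorem add_two_mul_catalan_succ (n : ℕ) :
    (n + 2) * catalan (n + 1) = 2 * (2 * n + 1) * catalan n := by
  apply Nat.eq_of_mul_eq_mul_left n.succ_pos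
  calc (n + 1) * ((n + 2) * catalan (n + 1))
      = (n + 1) * (n + 1).centralBinom := by rw [← succ_mul_catalan_eq_centralBinom]
    _ = 2 * (2 * n + 1) * n.centralBinom := Nat.succ_mul_centralBinom_succ n
    _ = (n + 1) * (2 * (2 * n + 1) * catalan n) := by
      rw [← succ_mul_catalan_eq_centralBinom]; ring

theorem three_mul_add_two_le_two_pow_succ {n : ℕ} (hn : 2 ≤ n) : 3 * n + 2 ≤ 2 ^ (n + 1) := by
  induction n, hn using Nat.le_induction with
  | base => norm_num
  | succ n _ ih => rw [pow_succ]; omega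

theorem two_pow_le_catalan_add (n : ℕ) : 2 ^ n ≤ catalan n + n := by
  rcases lt_or_ge n 2 with hn | hn
  · interval_cases n <;> simp [catalan_one]
  induction n, hn using Nat.le_induction with
  | base => simp [catalan_two]
  | succ n hn ih =>
    have hrec := add_two_mul_catalan_succ n
    have hpow := three_mul_add_two_le_two_pow_succ hn
    refine Nat.le_of_mul_le_mul_left ?_ (show 0 < n + 2 by omega)
    -- `(n + 2) 2 ^ (n + 1) ≤ 2 (2n + 1) (C n + n) + (n + 1)(n + 2)` reduces to
    -- `(n - 1)(3n + 2) ≤ (n - 1) 2 ^ (n + 1)`.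
    rw [pow_succ] at hpow ⊢
    nlinarith [Nat.mul_le_mul_left (2 * (2 * n + 1)) ih, Nat.mul_le_mul_left (n - 1) hpow]

theorem salzman_le_catalan_general (n : ℕ) : 2 ^ n - n ≤ catalan n :=
  tsub_le_iff_right.mpr (two_pow_le_catalan_add n)

/-- For n ≥ 1, the Salzman lower bound 2^n − n does not exceed the n-th Catalan number. -/
theorem salzman_le_catalan (n : ℕ) (hn : 1 ≤ n) : 2 ^ n - n ≤ catalan n :=
  salzman_le_catalan_general n
end
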